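/- Let T > 0, let λ : [0,T] → [0,∞) be continuous with λ > 0 on (0,T], Λ(t) := ∫₀ᵗ λ(s) ds, and let c > 0. Let θ : [0,T] × ℝ^d × ℝ^d → ℝ be differentiable in (x,ξ) with |∇ₓθ(t,x,ξ)| ≤ c·λ(t)·⟨ξ⟩ and |∇_ξθ(t,x,ξ)| ≤ c·λ(t)·⟨x⟩. Then for all N > N₁ > 0 there exists T₀ ∈ (0,T] such that: for every 0 ≤ s ≤ T₀ and every differentiable solution q, p : [s, T₀] → ℝ^d of q' = ∇_ξθ(τ,q,p), p' = −∇ₓθ(τ,q,p), if Λ(s)·⟨q(s)⟩⟨p(s)⟩ ≥ N·ln(⟨q(s)⟩⟨p(s)⟩), then Λ(t)·⟨q(t)⟩⟨p(t)⟩ ≥ N₁·ln(⟨q(t)⟩⟨p(t)⟩) for all t ∈ [s, T₀]. -/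

import Mathlib

/-- `Λ(t) = ∫₀ᵗ λ(s) ds`. -/
noncomputable def Lam (lam : ℝ → ℝ) (t : ℝ) : ℝ := ∫ s in (0:ℝ)..t, lam s

/-- The weight `⟨y⟩ = (e + |y|²)^{1/2}`. -/
noncomputable def jw {d : ℕ} (y : EuclideanSpace ℝ (Fin d)) : ℝ :=
  Real.sqrt (Real.exp 1 + ‖y‖ ^ 2)

/-!
Along the flow, `|q'| ≤ c λ ⟨q⟩` and `|p'| ≤ c λ ⟨p⟩`, so `τ ↦ ln(⟨q⟩⟨p⟩)` is Lipschitz with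
constant `2 c sup λ`. On a short interval it therefore moves by at most `a = ln(N / N₁) / 2`.
Since `ln(⟨q⟩⟨p⟩) ≥ 1`, this additive change costs at most a factor `1 + a ≤ eᵃ` on the
logarithm and a factor `e⁻ᵃ` on `⟨q⟩⟨p⟩`, while `Λ` is nondecreasing; the two factors
together use up exactly the ratio `N / N₁ = e²ᵃ`.
-/

open Real Set

section Weight

variable {d : ℕ}

lemma jw_sq (y : EuclideanSpace ℝ (Fin d)) : jw y ^ 2 = exp 1 + ‖y‖ ^ 2 :=
  sq_sqrt (by positivity)

lemma jw_pos (y : EuclideanSpace ℝ (Fin d)) : 0 < jw y :=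
  sqrt_pos.2 (by positivity)

lemma norm_le_jw (y : EuclideanSpace ℝ (Fin d)) : ‖y‖ ≤ jw y :=
  le_sqrt_of_sq_le (by linarith [exp_pos 1])

lemma one_le_log_jw_mul (x y : EuclideanSpace ℝ (Fin d)) : 1 ≤ log (jw x * jw y) := by
  rw [log_mul (jw_pos x).ne' (jw_pos y).ne', jw, jw,
    log_sqrt (by positivity), log_sqrt (by positivity)]
  have hx := log_le_log (exp_pos 1) (le_add_of_nonneg_right (sq_nonneg ‖x‖))
  have hy := log_le_log (exp_pos 1) (le_add_of_nonneg_right (sq_nonneg ‖y‖))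
  rw [log_exp] at hx hy
  linarith

lemma hasDerivWithinAt_log_jw {q : ℝ → EuclideanSpace ℝ (Fin d)}
    {Q : EuclideanSpace ℝ (Fin d)} {S : Set ℝ} {τ : ℝ} (hq : HasDerivWithinAt q Q S τ) :
    HasDerivWithinAt (fun u => log (jw (q u))) (inner ℝ (q τ) Q / jw (q τ) ^ 2) S τ := by
  have h := ((hq.norm_sq.const_add (exp 1)).log (by positivity)).const_mul (1 / 2 : ℝ)
  have hlog : (fun u => log (jw (q u))) = fun u => 1 / 2 * log (exp 1 + ‖q u‖ ^ 2) := by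
    funext u
    rw [jw, log_sqrt (by positivity), div_eq_inv_mul, one_div]
  rw [hlog]
  exact h.congr_deriv (by rw [jw_sq]; ring)

lemma abs_inner_div_jw_sq_le {y v : EuclideanSpace ℝ (Fin d)} {K : ℝ}
    (hv : ‖v‖ ≤ K * jw y) : |inner ℝ y v / jw y ^ 2| ≤ K := by
  have hy := pow_pos (jw_pos y) 2
  rw [abs_div, abs_of_pos hy, div_le_iff₀ hy]
  calc |inner ℝ y v| ≤ ‖y‖ * ‖v‖ := abs_real_inner_le_norm y v
    _ ≤ jw y * (K * jw y) := mul_le_mul (norm_le_jw y) hv (norm_nonneg v) (jw_pos y).le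
    _ = K * jw y ^ 2 := by ring

end Weight

section Flow

variable {d : ℕ} {q p Q P : ℝ → EuclideanSpace ℝ (Fin d)} {s b K : ℝ}

lemma abs_log_jw_sub_le
    (hq : ∀ τ ∈ Icc s b, HasDerivWithinAt q (Q τ) (Icc s b) τ)
    (hQ : ∀ τ ∈ Icc s b, ‖Q τ‖ ≤ K * jw (q τ)) :
    ∀ t ∈ Icc s b, |log (jw (q t)) - log (jw (q s))| ≤ K * (t - s) :=
  norm_image_sub_le_of_norm_deriv_le_segment' (fun τ hτ => hasDerivWithinAt_log_jw (hq τ hτ))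
    fun τ hτ => abs_inner_div_jw_sq_le (hQ τ (Ico_subset_Icc_self hτ))

lemma abs_log_jw_mul_sub_le
    (hq : ∀ τ ∈ Icc s b, HasDerivWithinAt q (Q τ) (Icc s b) τ)
    (hp : ∀ τ ∈ Icc s b, HasDerivWithinAt p (P τ) (Icc s b) τ)
    (hQ : ∀ τ ∈ Icc s b, ‖Q τ‖ ≤ K * jw (q τ))
    (hP : ∀ τ ∈ Icc s b, ‖P τ‖ ≤ K * jw (p τ)) {t : ℝ} (ht : t ∈ Icc s b) :
    |log (jw (q t) * jw (p t)) - log (jw (q s) * jw (p s))| ≤ 2 * K * (t - s) := by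
  simp only [log_mul (jw_pos _).ne' (jw_pos _).ne']
  have hq' := abs_log_jw_sub_le hq hQ t ht
  have hp' := abs_log_jw_sub_le hp hP t ht
  calc _ = |(log (jw (q t)) - log (jw (q s))) + (log (jw (p t)) - log (jw (p s)))| := by
        congr 1; ring
    _ ≤ _ := (abs_add_le _ _).trans (by linarith)

end Flow

section Lam

variable {lam : ℝ → ℝ} {T : ℝ}

lemma Lam_nonneg (hnn : ∀ τ ∈ Icc 0 T, 0 ≤ lam τ) {s : ℝ} (hs : s ∈ Icc 0 T) :
    0 ≤ Lam lam s :=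
  intervalIntegral.integral_nonneg hs.1 fun τ hτ => hnn τ ⟨hτ.1, hτ.2.trans hs.2⟩

lemma Lam_monotoneOn (hcont : ContinuousOn lam (Icc 0 T)) (hnn : ∀ τ ∈ Icc 0 T, 0 ≤ lam τ) :
    MonotoneOn (Lam lam) (Icc 0 T) := fun _ hs _ ht hst =>
  intervalIntegral.integral_mono_interval le_rfl hs.1 hst
    (MeasureTheory.ae_restrict_of_forall_mem measurableSet_Ioc
      fun τ hτ => hnn τ ⟨hτ.1.le, hτ.2.trans ht.2⟩)
    ((hcont.mono (Icc_subset_Icc_right ht.2)).intervalIntegrable_of_Icc ht.1)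

end Lam

lemma mul_log_le_of_abs_log_sub_le {N N₁ a Λs Λt Ws Wt : ℝ} (hN₁ : 0 < N₁)
    (hNa : N₁ * exp (2 * a) ≤ N) (hΛs : 0 ≤ Λs) (hΛ : Λs ≤ Λt) (hWs : 0 < Ws)
    (hlogWs : 1 ≤ log Ws) (hWt : 0 < Wt) (hdist : |log Wt - log Ws| ≤ a)
    (hzone : N * log Ws ≤ Λs * Ws) :
    N₁ * log Wt ≤ Λt * Wt := by
  obtain ⟨hlow, hup⟩ := abs_le.1 hdist
  have ha : 0 ≤ a := (abs_nonneg _).trans hdist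
  have hlog : log Wt ≤ exp a * log Ws :=
    calc log Wt ≤ (1 + a) * log Ws := by nlinarith
      _ ≤ exp a * log Ws := by gcongr; linarith [add_one_le_exp a]
  have hW : exp (-a) * Ws ≤ Wt := by
    calc exp (-a) * Ws = exp (log Ws - a) := by rw [sub_eq_add_neg, exp_add, exp_log hWs, mul_comm]
      _ ≤ exp (log Wt) := by gcongr; linarith
      _ = Wt := exp_log hWt
  calc N₁ * log Wt ≤ N₁ * (exp a * log Ws) := by gcongr
    _ = N₁ * exp (2 * a) * exp (-a) * log Ws := by rw [mul_assoc N₁, ← exp_add]; ring_nf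
    _ ≤ N * exp (-a) * log Ws := by gcongr
    _ = exp (-a) * (N * log Ws) := by ring
    _ ≤ exp (-a) * (Λs * Ws) := by gcongr
    _ = Λs * (exp (-a) * Ws) := by ring
    _ ≤ Λt * Wt := mul_le_mul hΛ hW (by positivity) (hΛs.trans hΛ)

theorem flow_stays_in_hyperbolic_zone_general
    (d : ℕ) (T : ℝ) (hT : 0 < T) (lam : ℝ → ℝ)
    (hcont : ContinuousOn lam (Set.Icc 0 T))
    (hnn : ∀ t ∈ Set.Icc 0 T, 0 ≤ lam t)
    (c : ℝ) (hc : 0 < c)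
    (θ : ℝ → EuclideanSpace ℝ (Fin d) → EuclideanSpace ℝ (Fin d) → ℝ)
    (hgx : ∀ t ∈ Set.Icc 0 T, ∀ (x ξ : EuclideanSpace ℝ (Fin d)),
      ‖gradient (fun x' => θ t x' ξ) x‖ ≤ c * lam t * jw ξ)
    (hgξ : ∀ t ∈ Set.Icc 0 T, ∀ (x ξ : EuclideanSpace ℝ (Fin d)),
      ‖gradient (fun ξ' => θ t x ξ') ξ‖ ≤ c * lam t * jw x) :
    ∀ N N₁ : ℝ, 0 < N₁ → N₁ < N →
      ∃ T₀ ∈ Set.Ioc 0 T, ∀ s ∈ Set.Icc 0 T₀,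
        ∀ q p : ℝ → EuclideanSpace ℝ (Fin d),
          (∀ τ ∈ Set.Icc s T₀, HasDerivWithinAt q
            (gradient (fun ξ' => θ τ (q τ) ξ') (p τ)) (Set.Icc s T₀) τ) →
          (∀ τ ∈ Set.Icc s T₀, HasDerivWithinAt p
            (-(gradient (fun x' => θ τ x' (p τ)) (q τ))) (Set.Icc s T₀) τ) →
          N * Real.log (jw (q s) * jw (p s)) ≤ Lam lam s * (jw (q s) * jw (p s)) →
          ∀ t ∈ Set.Icc s T₀,
            N₁ * Real.log (jw (q t) * jw (p t)) ≤
              Lam lam t * (jw (q t) * jw (p t)) := by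
  intro N N₁ hN₁ hN
  obtain ⟨M₀, hM₀⟩ := isCompact_Icc.bddAbove_image hcont
  set M := max M₀ 1
  have hM : 0 < M := lt_max_of_lt_right one_pos
  have hlamM : ∀ τ ∈ Icc 0 T, ∀ y : EuclideanSpace ℝ (Fin d), c * lam τ * jw y ≤ c * M * jw y :=
    fun τ hτ y => by
      have := (hM₀ (mem_image_of_mem lam hτ)).trans (le_max_left M₀ 1)
      have := jw_pos y
      gcongr
  set a := log (N / N₁) / 2
  have hNa : N₁ * exp (2 * a) ≤ N := by
    rw [show 2 * a = log (N / N₁) by ring, exp_log (div_pos (hN₁.trans hN) hN₁),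
      mul_div_cancel₀ _ hN₁.ne']
  have ha : 0 < a := half_pos (log_pos ((one_lt_div hN₁).2 hN))
  set T₀ := min T (a / (2 * (c * M)))
  refine ⟨T₀, ⟨lt_min hT (by positivity), min_le_left _ _⟩, ?_⟩
  intro s hs q p hq hp hzone t ht
  have hsub : Icc s T₀ ⊆ Icc 0 T := Icc_subset_Icc hs.1 (min_le_left _ _)
  have hs' : s ∈ Icc s T₀ := left_mem_Icc.2 (ht.1.trans ht.2)
  have hdist := abs_log_jw_mul_sub_le (K := c * M) hq hp
    (fun τ hτ => (hgξ τ (hsub hτ) _ _).trans (hlamM τ (hsub hτ) _))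
    (fun τ hτ => (norm_neg _).trans_le <| (hgx τ (hsub hτ) _ _).trans (hlamM τ (hsub hτ) _)) ht
  have hshort : 2 * (c * M) * (t - s) ≤ a := by
    rw [mul_comm, ← le_div_iff₀ (by positivity)]
    linarith [ht.2, hs.1, min_le_right T (a / (2 * (c * M)))]
  exact mul_log_le_of_abs_log_sub_le hN₁ hNa (Lam_nonneg hnn (hsub hs'))
    (Lam_monotoneOn hcont hnn (hsub hs') (hsub ht) ht.1) (mul_pos (jw_pos _) (jw_pos _))
    (one_le_log_jw_mul _ _) (mul_pos (jw_pos _) (jw_pos _)) (hdist.trans hshort) hzone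

/-- Lemma 5.2 of the paper: if the initial data of the Hamiltonian flow lie in the
hyperbolic zone `Z_hyp(N)`, then the flow stays in `Z_hyp(N₁)` for `N₁ < N` on a
sufficiently small time interval `[0,T₀]`. -/
theorem flow_stays_in_hyperbolic_zone
    (d : ℕ) (T : ℝ) (hT : 0 < T) (lam : ℝ → ℝ)
    (hcont : ContinuousOn lam (Set.Icc 0 T))
    (hnn : ∀ t ∈ Set.Icc 0 T, 0 ≤ lam t)
    (hpos : ∀ t ∈ Set.Ioc 0 T, 0 < lam t)
    (c : ℝ) (hc : 0 < c)
    (θ : ℝ → EuclideanSpace ℝ (Fin d) → EuclideanSpace ℝ (Fin d) → ℝ)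
    (hdiffx : ∀ t ∈ Set.Icc 0 T, ∀ (x ξ : EuclideanSpace ℝ (Fin d)),
      DifferentiableAt ℝ (fun x' => θ t x' ξ) x)
    (hdiffξ : ∀ t ∈ Set.Icc 0 T, ∀ (x ξ : EuclideanSpace ℝ (Fin d)),
      DifferentiableAt ℝ (fun ξ' => θ t x ξ') ξ)
    (hgx : ∀ t ∈ Set.Icc 0 T, ∀ (x ξ : EuclideanSpace ℝ (Fin d)),
      ‖gradient (fun x' => θ t x' ξ) x‖ ≤ c * lam t * jw ξ)
    (hgξ : ∀ t ∈ Set.Icc 0 T, ∀ (x ξ : EuclideanSpace ℝ (Fin d)),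
      ‖gradient (fun ξ' => θ t x ξ') ξ‖ ≤ c * lam t * jw x) :
    ∀ N N₁ : ℝ, 0 < N₁ → N₁ < N →
      ∃ T₀ ∈ Set.Ioc 0 T, ∀ s ∈ Set.Icc 0 T₀,
        ∀ q p : ℝ → EuclideanSpace ℝ (Fin d),
          (∀ τ ∈ Set.Icc s T₀, HasDerivWithinAt q
            (gradient (fun ξ' => θ τ (q τ) ξ') (p τ)) (Set.Icc s T₀) τ) →
          (∀ τ ∈ Set.Icc s T₀, HasDerivWithinAt p
            (-(gradient (fun x' => θ τ x' (p τ)) (q τ))) (Set.Icc s T₀) τ) →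
          N * Real.log (jw (q s) * jw (p s)) ≤ Lam lam s * (jw (q s) * jw (p s)) →
          ∀ t ∈ Set.Icc s T₀,
            N₁ * Real.log (jw (q t) * jw (p t)) ≤
              Lam lam t * (jw (q t) * jw (p t)) :=
  flow_stays_in_hyperbolic_zone_general d T hT lam hcont hnn c hc θ hgx hgξ
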